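/- Every minimal hitting set of a finite family of nonempty sets S is an answer set of the positive disjunctive program D(S); that is, if h is a hitting set of S and no proper subset of h is a hitting set, then h is a minimal model of D(S). -/
import Mathlib

structure Rule (α : Type*) where
  head : Set α
  pos : Set α
  neg : Set α

def satRule {α : Type*} (M : Set α) (r : Rule α) : Prop :=
  r.pos ⊆ M ∧ r.neg ∩ M = ∅ → (r.head ∩ M).Nonempty

def isModel {α : Type*} (M : Set α) (P : Set (Rule α)) : Prop :=
  ∀ r ∈ P, satRule M r

def reduct {α : Type*} (P : Set (Rule α)) (M : Set α) : Set (Rule α) :=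
  {r' | ∃ r ∈ P, r.neg ∩ M = ∅ ∧ r' = ⟨r.head, r.pos, ∅⟩}

def prog {α : Type*} (S : Set (Set α)) : Set (Rule α) :=
  {r | ∃ T ∈ S, r = ⟨T, ∅, ∅⟩}

def IsHittingSet {α : Type*} (S : Set (Set α)) (h : Set α) : Prop :=
  ∀ T ∈ S, (h ∩ T).Nonempty

def IsMinHittingSet {α : Type*} (S : Set (Set α)) (h : Set α) : Prop :=
  IsHittingSet S h ∧ ∀ h' ⊂ h, ¬ IsHittingSet S h'
def answerSet {α : Type*} (M : Set α) (P : Set (Rule α)) : Prop :=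
  isModel M (reduct P M) ∧ ∀ M' ⊂ M, ¬ isModel M' (reduct P M)

lemma model_prog_iff {α : Type*} (S : Set (Set α)) (M : Set α) :
    isModel M (prog S) ↔ IsHittingSet S M := by
  constructor
  · intro hm T hT
    have := hm ⟨T, ∅, ∅⟩ ⟨T, hT, rfl⟩ ⟨by simp, by simp⟩
    simpa [Set.inter_comm] using this
  · rintro hh r ⟨T, hT, rfl⟩ _
    simpa [Set.inter_comm] using hh T hT

lemma model_reduct_iff {α : Type*} (S : Set (Set α)) (h M : Set α) :
    isModel M (reduct (prog S) h) ↔ IsHittingSet S M := by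
  constructor
  · intro hm T hT
    have := hm ⟨T, ∅, ∅⟩ ⟨⟨T, ∅, ∅⟩, ⟨T, hT, rfl⟩, by simp, rfl⟩ ⟨by simp, by simp⟩
    simpa [Set.inter_comm] using this
  · rintro hh r ⟨r₀, ⟨T, hT, rfl⟩, -, rfl⟩ _
    simpa [Set.inter_comm] using hh T hT

/-- Every minimal hitting set of a finite family of nonempty sets S
is an answer set (minimal model) of the positive disjunctive program D(S). -/
theorem minHitting_answerSet {α : Type*} (S : Set (Set α)) (hfin : S.Finite)
    (hne : ∀ T ∈ S, T.Nonempty) (h : Set α) (hmin : IsMinHittingSet S h) :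
    answerSet h (prog S) ∧ (isModel h (prog S) ∧ ∀ M' ⊂ h, ¬ isModel M' (prog S)) := by
  obtain ⟨hh, hmn⟩ := hmin
  refine ⟨⟨(model_reduct_iff S h h).2 hh,
      fun M' hM' hc => hmn M' hM' ((model_reduct_iff S h M').1 hc)⟩,
    (model_prog_iff S h).2 hh,
    fun M' hM' hc => hmn M' hM' ((model_prog_iff S M').1 hc)⟩
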